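/- arXiv:1703.04554 — 3 statements merged into one kernel-verified Lean document; each statement's English description precedes it below -/
import Mathlib

section
/- For every i with 1 ≤ i ≤ u, the basic reproduction number dominates the group-specific quantity R̃0^i: ρ(G(M,P,B)) ≥ R̃0^i, where R̃0^i = (ν_i/((ν_i+μ_i)(γ_i+μ_i+δ_i))) · Σ_{j=1}^{v} β_j m_{ij} p_{ij} S*_i / (Σ_{k=1}^{u} m_{kj} S*_k). Consequently ρ(G(M,P,B)) ≥ max_{1≤i≤u} R̃0^i. -/
/-!
The diagonal entry `G i i` of the next generation matrix is exactly `R̃0^i`, and `G` is entrywise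
nonnegative. For a nonnegative matrix `(A ^ k) i i ≥ (A i i) ^ k`, so Gelfand's formula
`ρ(A) = lim ‖A ^ k‖ ^ (1 / k)` gives `ρ(A) ≥ A i i`.
-/

open Matrix

/-- Spectral radius of a real matrix: the largest modulus of a complex eigenvalue. -/
noncomputable def specRad {n : Type*} [Fintype n] [DecidableEq n] (A : Matrix n n ℝ) : ℝ :=
  sSup ((fun z : ℂ => ‖z‖) '' spectrum ℂ (A.map (fun x : ℝ => (x : ℂ))))

/-- Next generation matrix
`G(M,P,B) = diag(S*)·M·diag(B)·diag(MᵀS*)⁻¹·Pᵀ·diag(ν)·diag((μ+ν)∘(μ+γ+δ))⁻¹`. -/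
noncomputable def NGM {u v : ℕ} (Sstar ν μ γ δ : Fin u → ℝ) (B : Fin v → ℝ)
    (M P : Matrix (Fin u) (Fin v) ℝ) : Matrix (Fin u) (Fin u) ℝ :=
  Matrix.diagonal Sstar * M * Matrix.diagonal B *
    Matrix.diagonal (fun j => ((Mᵀ *ᵥ Sstar) j)⁻¹) * Pᵀ *
    Matrix.diagonal ν *
    Matrix.diagonal (fun i => ((μ i + ν i) * (μ i + γ i + δ i))⁻¹)

open scoped ENNReal

theorem spectrum.le_spectralRadius_of_pow_le_nnnorm_pow {A : Type*} [NormedRing A]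
    [NormedAlgebra ℂ A] [CompleteSpace A] (a : A) {c : ℝ≥0∞}
    (h : ∀ n : ℕ, c ^ n ≤ ‖a ^ n‖₊) : c ≤ spectralRadius ℂ a := by
  refine ge_of_tendsto (spectrum.gelfand_formula a)
    (Filter.eventually_atTop.2 ⟨1, fun n hn => ?_⟩)
  calc c = (c ^ n) ^ (1 / n : ℝ) := by rw [one_div, ENNReal.pow_rpow_inv_natCast (by omega)]
    _ ≤ (‖a ^ n‖₊ : ℝ≥0∞) ^ (1 / n : ℝ) := ENNReal.rpow_le_rpow (h n) (by positivity)

namespace Matrix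

variable {l m n R : Type*}

theorem diagonal_apply_nonneg [DecidableEq m] [Zero R] [Preorder R] {d : m → R}
    (hd : ∀ i, 0 ≤ d i) (i j : m) : 0 ≤ diagonal d i j := by
  rw [diagonal_apply]
  split_ifs
  exacts [hd i, le_rfl]

variable [Fintype m] [Semiring R] [PartialOrder R] [IsOrderedRing R]

theorem mul_apply_nonneg {A : Matrix l m R} {B : Matrix m n R} (hA : ∀ i j, 0 ≤ A i j)
    (hB : ∀ i j, 0 ≤ B i j) (i : l) (k : n) : 0 ≤ (A * B) i k :=
  Finset.sum_nonneg fun j _ => mul_nonneg (hA i j) (hB j k)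

theorem apply_self_pow_le_pow_apply_self [DecidableEq m] {A : Matrix m m R}
    (hA : ∀ i j, 0 ≤ A i j) (i : m) (k : ℕ) : A i i ^ k ≤ (A ^ k) i i := by
  induction k with
  | zero => simp
  | succ k ih =>
    calc A i i ^ (k + 1) = A i i ^ k * A i i := pow_succ _ _
      _ ≤ (A ^ k) i i * A i i := mul_le_mul_of_nonneg_right ih (hA i i)
      _ ≤ ∑ j, (A ^ k) i j * A j i :=
        Finset.single_le_sum (f := fun j => (A ^ k) i j * A j i)
          (fun j _ => mul_nonneg (pow_apply_nonneg hA k i j) (hA j i)) (Finset.mem_univ i)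
      _ = (A ^ (k + 1)) i i := by rw [pow_succ, mul_apply]

end Matrix

section SpecRad

attribute [local instance] Matrix.linftyOpSeminormedAddCommGroup Matrix.linftyOpNormedRing
  Matrix.linftyOpNormedAlgebra

theorem Matrix.nnnorm_apply_le_linfty_opNNNorm {m n α : Type*} [Fintype m] [Fintype n]
    [SeminormedAddCommGroup α] (A : Matrix m n α) (i : m) (j : n) : ‖A i j‖₊ ≤ ‖A‖₊ := by
  rw [linfty_opNNNorm_def]
  exact (Finset.single_le_sum (fun k _ => zero_le) (Finset.mem_univ j)).trans
    (Finset.le_sup (f := fun i => ∑ k, ‖A i k‖₊) (Finset.mem_univ i))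

variable {n : Type*} [Fintype n] [DecidableEq n]

theorem specRad_nonneg (A : Matrix n n ℝ) : 0 ≤ specRad A :=
  Real.sSup_nonneg fun _ ⟨z, _, hz⟩ => hz ▸ norm_nonneg z

theorem spectralRadius_map_ofReal_eq_ofReal_specRad [Nonempty n] (A : Matrix n n ℝ) :
    spectralRadius ℂ (A.map (fun x : ℝ => (x : ℂ))) = ENNReal.ofReal (specRad A) := by
  set Ac := A.map (fun x : ℝ => (x : ℂ))
  obtain ⟨z, hz, hz_eq⟩ := spectrum.exists_nnnorm_eq_spectralRadius Ac
  have : IsGreatest ((fun z : ℂ => ‖z‖) '' spectrum ℂ Ac) ‖z‖ := by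
    refine ⟨⟨z, hz, rfl⟩, ?_⟩
    rintro _ ⟨w, hw, rfl⟩
    have := le_iSup₂ (f := fun w (_ : w ∈ spectrum ℂ _) => (‖w‖₊ : ℝ≥0∞)) w hw
    rw [← spectralRadius, ← hz_eq] at this
    exact_mod_cast this
  rw [specRad, this.csSup_eq, ← hz_eq, ofReal_norm, enorm_eq_nnnorm]

theorem apply_self_le_specRad {A : Matrix n n ℝ} (hA : ∀ i j, 0 ≤ A i j) (i : n) :
    A i i ≤ specRad A := by
  have : Nonempty n := ⟨i⟩
  set Ac := A.map (fun x : ℝ => (x : ℂ))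
  have hpow : ∀ k : ℕ, ENNReal.ofReal (A i i) ^ k ≤ ‖Ac ^ k‖₊ := fun k => by
    have hAc : Ac ^ k = (A ^ k).map (fun x : ℝ => (x : ℂ)) :=
      (map_pow Complex.ofRealHom.mapMatrix A k).symm
    calc ENNReal.ofReal (A i i) ^ k = ENNReal.ofReal (A i i ^ k) :=
          (ENNReal.ofReal_pow (hA i i) k).symm
      _ ≤ ENNReal.ofReal ‖((A ^ k) i i : ℂ)‖ := by
          gcongr
          exact (apply_self_pow_le_pow_apply_self hA i k).trans
            ((le_abs_self _).trans (Complex.norm_real _).ge)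
      _ ≤ ‖Ac ^ k‖₊ := by
          rw [ofReal_norm, enorm_eq_nnnorm, hAc]
          exact ENNReal.coe_le_coe.2 <|
            nnnorm_apply_le_linfty_opNNNorm ((A ^ k).map (fun x : ℝ => (x : ℂ))) i i
  have := spectrum.le_spectralRadius_of_pow_le_nnnorm_pow Ac hpow
  rwa [spectralRadius_map_ofReal_eq_ofReal_specRad,
    ENNReal.ofReal_le_ofReal_iff (specRad_nonneg A)] at this

end SpecRad

section NextGenerationMatrix

variable {u v : ℕ}

theorem NGM_apply_nonneg {Sstar ν μ γ δ : Fin u → ℝ} {B : Fin v → ℝ}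
    {M P : Matrix (Fin u) (Fin v) ℝ} (hS : ∀ i, 0 ≤ Sstar i) (hν : ∀ i, 0 ≤ ν i)
    (hμ : ∀ i, 0 ≤ μ i) (hγ : ∀ i, 0 ≤ γ i) (hδ : ∀ i, 0 ≤ δ i) (hB : ∀ j, 0 ≤ B j)
    (hM : ∀ i j, 0 ≤ M i j) (hP : ∀ i j, 0 ≤ P i j) (i k : Fin u) :
    0 ≤ NGM Sstar ν μ γ δ B M P i k := by
  have hMS (j : Fin v) : 0 ≤ (Mᵀ *ᵥ Sstar) j :=
    dotProduct_nonneg_of_nonneg (fun k => hM k j) hS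
  have hden (i : Fin u) : 0 ≤ ((μ i + ν i) * (μ i + γ i + δ i))⁻¹ := by
    have := hμ i; have := hν i; have := hγ i; have := hδ i
    positivity
  refine mul_apply_nonneg (mul_apply_nonneg (mul_apply_nonneg (mul_apply_nonneg
    (mul_apply_nonneg (mul_apply_nonneg (diagonal_apply_nonneg hS) hM)
    (diagonal_apply_nonneg hB)) (diagonal_apply_nonneg fun j => inv_nonneg.2 (hMS j)))
    (fun j i => hP i j)) (diagonal_apply_nonneg hν)) (diagonal_apply_nonneg hden) i k

theorem NGM_apply_self (Sstar ν μ γ δ : Fin u → ℝ) (B : Fin v → ℝ)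
    (M P : Matrix (Fin u) (Fin v) ℝ) (i : Fin u) :
    NGM Sstar ν μ γ δ B M P i i = ν i / ((ν i + μ i) * (γ i + μ i + δ i)) *
      ∑ j, B j * M i j * P i j * Sstar i / ∑ k, M k j * Sstar k := by
  rw [NGM, mul_diagonal, mul_diagonal, mul_apply, Finset.sum_mul, Finset.sum_mul, Finset.mul_sum]
  refine Finset.sum_congr rfl fun j _ => ?_
  simp only [mul_diagonal, diagonal_mul, transpose_apply, mulVec, dotProduct]
  ring

end NextGenerationMatrix

theorem stmt3_general (u v : ℕ)
    (Λ μ ν γ δ : Fin u → ℝ)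
    (hΛ : ∀ i, 0 < Λ i) (hμ : ∀ i, 0 < μ i) (hν : ∀ i, 0 < ν i) (hγ : ∀ i, 0 < γ i)
    (hδ : ∀ i, 0 ≤ δ i)
    (B : Fin v → ℝ) (hB : ∀ j, 0 ≤ B j)
    (M P : Matrix (Fin u) (Fin v) ℝ)
    (hM : ∀ i j, 0 ≤ M i j) (hP : ∀ i j, 0 ≤ P i j)
    (Sstar : Fin u → ℝ) (hSstar : ∀ i, Sstar i = Λ i / μ i)
    :
    (∀ i : Fin u,
      ν i / ((ν i + μ i) * (γ i + μ i + δ i)) *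
          ∑ j : Fin v, B j * M i j * P i j * Sstar i / (∑ k : Fin u, M k j * Sstar k) ≤
        specRad (NGM Sstar ν μ γ δ B M P)) ∧
    (⨆ i : Fin u, ν i / ((ν i + μ i) * (γ i + μ i + δ i)) *
          ∑ j : Fin v, B j * M i j * P i j * Sstar i / (∑ k : Fin u, M k j * Sstar k)) ≤
      specRad (NGM Sstar ν μ γ δ B M P) := by
  have hS (i : Fin u) : 0 ≤ Sstar i := hSstar i ▸ (div_pos (hΛ i) (hμ i)).le
  have hG := NGM_apply_nonneg hS (fun i => (hν i).le) (fun i => (hμ i).le) (fun i => (hγ i).le)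
    hδ hB hM hP
  have hdiag (i : Fin u) := NGM_apply_self Sstar ν μ γ δ B M P i ▸ apply_self_le_specRad hG i
  exact ⟨hdiag, Real.iSup_le hdiag (specRad_nonneg _)⟩

/-- the basic reproduction number dominates each group-specific
quantity `R̃0^i`, hence also their maximum. -/
theorem stmt3 (u v : ℕ) (hu : 1 ≤ u) (hv : 1 ≤ v)
    (Λ μ ν γ δ η : Fin u → ℝ)
    (hΛ : ∀ i, 0 < Λ i) (hμ : ∀ i, 0 < μ i) (hν : ∀ i, 0 < ν i) (hγ : ∀ i, 0 < γ i)
    (hδ : ∀ i, 0 ≤ δ i) (hη : ∀ i, 0 ≤ η i)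
    (B : Fin v → ℝ) (hB : ∀ j, 0 ≤ B j)
    (M P : Matrix (Fin u) (Fin v) ℝ)
    (hM : ∀ i j, 0 ≤ M i j) (hP : ∀ i j, 0 ≤ P i j)
    (Sstar : Fin u → ℝ) (hSstar : ∀ i, Sstar i = Λ i / μ i)
    (hMS : ∀ j, 0 < (Mᵀ *ᵥ Sstar) j)
    :
    (∀ i : Fin u,
      ν i / ((ν i + μ i) * (γ i + μ i + δ i)) *
          ∑ j : Fin v, B j * M i j * P i j * Sstar i / (∑ k : Fin u, M k j * Sstar k) ≤
        specRad (NGM Sstar ν μ γ δ B M P)) ∧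
    (⨆ i : Fin u, ν i / ((ν i + μ i) * (γ i + μ i + δ i)) *
          ∑ j : Fin v, B j * M i j * P i j * Sstar i / (∑ k : Fin u, M k j * Sstar k)) ≤
      specRad (NGM Sstar ν μ γ δ B M P) :=
  stmt3_general u v Λ μ ν γ δ hΛ hμ hν hγ hδ B hB M P hM hP Sstar hSstar
end

section
/- Suppose M = 𝟙·mᵀ where 𝟙 ∈ ℝ^u is the all-ones vector and m ∈ ℝ^v has positive entries summing to 1 (so M is rank one and row-stochastic). Then ρ(G(M,P,B)) = (Σ_{i=1}^u S*_i)⁻¹ · ⟨B, Pᵀ·diag(ν)·diag((μ+ν)∘(μ+γ+δ))⁻¹·S*⟩; in particular the basic reproduction number does not depend on m. -/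
/-!
For `M = 𝟙 mᵀ` one has `Mᵀ S* = (∑ S*ᵢ) m`, so the factor `m_j / (Mᵀ S*)_j` occurring in `G`
is the constant `(∑ S*ᵢ)⁻¹` and `G = S* wᵀ` has rank one, with
`w = (∑ S*ᵢ)⁻¹ diag(ν) diag((μ+ν)∘(μ+γ+δ))⁻¹ P B`. The characteristic polynomial of
`x yᵀ` is `X ^ n - ⟨x, y⟩ X ^ (n - 1)`, so its spectral radius is `|⟨x, y⟩|`, and `⟨S*, w⟩` is
the nonnegative quantity of the statement.
-/

open Matrix

open Polynomial in
theorem Matrix.spectrum_vecMulVec_subset {K n : Type*} [Field K] [Fintype n] [DecidableEq n]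
    (u v : n → K) : spectrum K (vecMulVec u v) ⊆ {0, u ⬝ᵥ v} := by
  intro r hr
  rw [mem_spectrum_iff_isRoot_charpoly, charpoly_vecMulVec, IsRoot.def] at hr
  cases isEmpty_or_nonempty n with
  | inl => simp at hr
  | inr =>
    obtain ⟨k, hk⟩ := Nat.exists_eq_succ_of_ne_zero (Fintype.card_ne_zero (α := n))
    rw [hk] at hr
    have hroot : r ^ k * (r - u ⬝ᵥ v) = 0 := by simpa [pow_succ, mul_sub, mul_comm] using hr
    rcases mul_eq_zero.mp hroot with h | h
    · exact .inl (pow_eq_zero_iff'.mp h).1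
    · exact .inr (sub_eq_zero.mp h)

open Polynomial in
theorem Matrix.dotProduct_mem_spectrum_vecMulVec {K n : Type*} [Field K] [Fintype n]
    [DecidableEq n] [Nonempty n] (u v : n → K) : u ⬝ᵥ v ∈ spectrum K (vecMulVec u v) := by
  rw [mem_spectrum_iff_isRoot_charpoly, charpoly_vecMulVec, IsRoot.def]
  obtain ⟨k, hk⟩ := Nat.exists_eq_succ_of_ne_zero (Fintype.card_ne_zero (α := n))
  simp [hk, pow_succ, mul_comm]

theorem specRad_vecMulVec {n : Type*} [Fintype n] [DecidableEq n] (u v : n → ℝ) :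
    specRad (vecMulVec u v) = |u ⬝ᵥ v| := by
  set uℂ : n → ℂ := fun i => u i
  set vℂ : n → ℂ := fun i => v i
  have hmap : (vecMulVec u v).map (fun x : ℝ => (x : ℂ)) = vecMulVec uℂ vℂ := by
    ext; simp [uℂ, vℂ, vecMulVec_apply]
  have hdot : uℂ ⬝ᵥ vℂ = ((u ⬝ᵥ v : ℝ) : ℂ) := by
    simp [uℂ, vℂ, dotProduct]
  have hbound : ∀ x ∈ (fun z : ℂ => ‖z‖) '' spectrum ℂ (vecMulVec uℂ vℂ), x ≤ |u ⬝ᵥ v| := by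
    rintro _ ⟨z, hz, rfl⟩
    rcases spectrum_vecMulVec_subset _ _ hz with rfl | rfl <;> simp [hdot]
  rw [specRad, hmap]
  refine le_antisymm (Real.sSup_le hbound (abs_nonneg _)) ?_
  cases isEmpty_or_nonempty n with
  | inl => simp
  | inr =>
    exact le_csSup ⟨_, hbound⟩ ⟨_, dotProduct_mem_spectrum_vecMulVec _ _, by simp [hdot]⟩

theorem Matrix.transpose_replicateRow_mulVec {R ι κ : Type*} [CommSemiring R] [Fintype ι]
    (m : κ → R) (S : ι → R) : (replicateRow ι m)ᵀ *ᵥ S = (∑ i, S i) • m := by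
  ext j
  rw [Pi.smul_apply, smul_eq_mul, Finset.sum_mul]
  exact Finset.sum_congr rfl fun _ _ => mul_comm _ _

theorem Matrix.diagonal_mul_replicateRow {R ι κ : Type*} [NonUnitalNonAssocSemiring R] [Fintype ι]
    [DecidableEq ι] (S : ι → R) (m : κ → R) : diagonal S * replicateRow ι m = vecMulVec S m := by
  ext
  simp [vecMulVec_apply]

theorem Matrix.diagonal_mul_replicateRow_mul_diagonal_mul_diagonal_inv {K ι κ : Type*} [Field K]
    [Fintype ι] [Fintype κ] [DecidableEq ι] [DecidableEq κ] (S : ι → K) (m B : κ → K)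
    (hm : ∀ j, m j ≠ 0) :
    diagonal S * replicateRow ι m * diagonal B *
        diagonal (fun j => (((replicateRow ι m)ᵀ *ᵥ S) j)⁻¹) =
      vecMulVec S ((∑ i, S i)⁻¹ • B) := by
  rw [diagonal_mul_replicateRow, vecMulVec_mul, vecMulVec_mul]
  congr
  ext j
  simp only [vecMul_diagonal, transpose_replicateRow_mulVec, Pi.smul_apply, smul_eq_mul]
  field_simp [hm j]

theorem stmt8_general (u v : ℕ)
    (Λ μ ν γ δ : Fin u → ℝ)
    (hΛ : ∀ i, 0 < Λ i) (hμ : ∀ i, 0 < μ i) (hν : ∀ i, 0 < ν i) (hγ : ∀ i, 0 < γ i)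
    (hδ : ∀ i, 0 ≤ δ i)
    (B : Fin v → ℝ) (hB : ∀ j, 0 ≤ B j)
    (M P : Matrix (Fin u) (Fin v) ℝ)
    (hP : ∀ i j, 0 ≤ P i j)
    (Sstar : Fin u → ℝ) (hSstar : ∀ i, Sstar i = Λ i / μ i)
    (m : Fin v → ℝ) (hm : ∀ j, 0 < m j)
    (hMrank1 : M = Matrix.of fun _ j => m j) :
    specRad (NGM Sstar ν μ γ δ B M P) =
      (∑ i : Fin u, Sstar i)⁻¹ *
        (B ⬝ᵥ (Pᵀ *ᵥ fun i => ν i * ((μ i + ν i) * (μ i + γ i + δ i))⁻¹ * Sstar i)) := by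
  have hS : ∀ i, 0 ≤ Sstar i := fun i => hSstar i ▸ (div_pos (hΛ i) (hμ i)).le
  have hw : ∀ i, 0 ≤ ν i * ((μ i + ν i) * (μ i + γ i + δ i))⁻¹ * Sstar i := fun i => by
    have := hμ i; have := hν i; have := hγ i; have := hδ i; have := hS i
    positivity
  have hdot : ∀ x : Fin u → ℝ, Sstar ⬝ᵥ (x ᵥ* diagonal ν ᵥ*
      diagonal (fun i => ((μ i + ν i) * (μ i + γ i + δ i))⁻¹)) =
      x ⬝ᵥ fun i => ν i * ((μ i + ν i) * (μ i + γ i + δ i))⁻¹ * Sstar i := fun x => by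
    simp only [dotProduct, vecMul_diagonal]
    exact Finset.sum_congr rfl fun i _ => by ring
  rw [NGM, hMrank1, ← replicateRow,
    diagonal_mul_replicateRow_mul_diagonal_mul_diagonal_inv _ _ _ fun j => (hm j).ne',
    vecMulVec_mul, vecMulVec_mul, vecMulVec_mul, specRad_vecMulVec, hdot, smul_vecMul,
    smul_dotProduct, ← dotProduct_mulVec, smul_eq_mul, abs_of_nonneg]
  exact mul_nonneg (inv_nonneg.mpr (Finset.sum_nonneg fun i _ => hS i))
    (dotProduct_nonneg_of_nonneg (fun j => hB j) fun j =>
      dotProduct_nonneg_of_nonneg (fun i => hP i j) hw)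

/-- if `M = 𝟙·mᵀ` is rank one and row-stochastic, then
`ρ(G) = (Σ_i S*_i)⁻¹ ⟨B, Pᵀ·diag(ν)·diag((μ+ν)∘(μ+γ+δ))⁻¹·S*⟩`; in particular
the basic reproduction number does not depend on `m`. -/
theorem stmt8 (u v : ℕ) (hu : 1 ≤ u) (hv : 1 ≤ v)
    (Λ μ ν γ δ η : Fin u → ℝ)
    (hΛ : ∀ i, 0 < Λ i) (hμ : ∀ i, 0 < μ i) (hν : ∀ i, 0 < ν i) (hγ : ∀ i, 0 < γ i)
    (hδ : ∀ i, 0 ≤ δ i) (hη : ∀ i, 0 ≤ η i)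
    (B : Fin v → ℝ) (hB : ∀ j, 0 ≤ B j)
    (M P : Matrix (Fin u) (Fin v) ℝ)
    (hM : ∀ i j, 0 ≤ M i j) (hP : ∀ i j, 0 ≤ P i j)
    (Sstar : Fin u → ℝ) (hSstar : ∀ i, Sstar i = Λ i / μ i)
    (hMS : ∀ j, 0 < (Mᵀ *ᵥ Sstar) j)
    (m : Fin v → ℝ) (hm : ∀ j, 0 < m j) (hmsum : ∑ j : Fin v, m j = 1)
    (hMrank1 : M = Matrix.of fun _ j => m j) :
    specRad (NGM Sstar ν μ γ δ B M P) =
      (∑ i : Fin u, Sstar i)⁻¹ *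
        (B ⬝ᵥ (Pᵀ *ᵥ fun i => ν i * ((μ i + ν i) * (μ i + γ i + δ i))⁻¹ * Sstar i)) :=
  stmt8_general u v Λ μ ν γ δ hΛ hμ hν hγ hδ B hB M P hP Sstar hSstar m hm hMrank1
end

section
/- Consider the identical-mobility model with no disease-induced mortality (δ = 0), in which all epidemiological classes use the same residence-time matrix M and N̄ = S* = Λ∘(1/μ). Assume all entries of B are positive, the u×u matrix M·Mᵀ is irreducible (i.e., for every pair (i,j) there exists an integer n ≥ 1 with ((MMᵀ)^n)_{ij} > 0), every column of M has a positive entry (so (MᵀN̄)_j > 0 for all j), and R0^Eq > 1, where R0^Eq = ρ(diag(S*)·M·diag(B)·diag(MᵀS*)⁻¹·Mᵀ·diag(ν)·diag((μ+ν)∘(μ+γ))⁻¹). Then there exists exactly one tuple (S,E,I,R) ∈ (ℝ^u)^4 with all entries of I positive satisfying 0 = Λ − diag(S)·M·diag(B)·diag(MᵀN̄)⁻¹·Mᵀ·I − diag(μ)·S + diag(η)·R, 0 = diag(S)·M·diag(B)·diag(MᵀN̄)⁻¹·Mᵀ·I − diag(ν+μ)·E, 0 = diag(ν)·E − diag(γ+μ)·I,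 and 0 = diag(γ)·I − diag(η+μ)·R. -/
/-!
Eliminating `E`, `R` and then `S` from the equilibrium equations leaves a fixed-point problem
`I = T I` for `T x = S* ∘ A x / (d + c ∘ A x)` (componentwise), where
`A = M diag(B) diag(MᵀS*)⁻¹ Mᵀ` and `d`, `c` are positive vectors built from the rates.
`T` is monotone, bounded by `S* / c`, and strictly subhomogeneous (`θ T x < T (θ x)` for
`0 < θ < 1`). An eigenvector for a complex eigenvalue of modulus `R0^Eq > 1` gives, through the
triangle inequality, a nonnegative subeigenvector of the next-generation matrix; irreducibility
of `A` (inherited from `M Mᵀ`) spreads it to a positive one, hence `ε w ≤ T (ε w)` for small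
`ε > 0`, and Knaster–Tarski on the box `[ε w, S* / c]` gives a positive fixed point.
Two positive fixed points `P`, `Q` are compared through the largest `θ` with `θ Q ≤ P`:
strict subhomogeneity rules out `θ < 1`.
-/

open Matrix

open Filter Topology

namespace Matrix

variable {m n : Type*} [Fintype n]

lemma mulVec_mono_of_nonneg {A : Matrix m n ℝ} (hA : ∀ i j, 0 ≤ A i j) {x y : n → ℝ}
    (hxy : x ≤ y) : A *ᵥ x ≤ A *ᵥ y := fun i =>
  Finset.sum_le_sum fun k _ => mul_le_mul_of_nonneg_left (hxy k) (hA i k)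

lemma mulVec_nonneg_of_nonneg {A : Matrix m n ℝ} (hA : ∀ i j, 0 ≤ A i j) {x : n → ℝ}
    (hx : 0 ≤ x) : 0 ≤ A *ᵥ x := by
  simpa using mulVec_mono_of_nonneg hA hx

lemma single_mul_le_mulVec {A : Matrix m n ℝ} (hA : ∀ i j, 0 ≤ A i j) {x : n → ℝ}
    (hx : 0 ≤ x) (i : m) (j : n) : A i j * x j ≤ (A *ᵥ x) i :=
  Finset.single_le_sum (f := fun k => A i k * x k) (fun k _ => mul_nonneg (hA i k) (hx k))
    (Finset.mem_univ j)

variable [DecidableEq n]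

lemma exists_mulVec_eq_smul_of_mem_spectrum {K : Type*} [Field K] {X : Matrix n n K}
    {z : K} (h : z ∈ spectrum K X) : ∃ v ≠ 0, X *ᵥ v = z • v := by
  rw [← spectrum_toLin', ← Module.End.hasEigenvalue_iff_mem_spectrum] at h
  obtain ⟨v, hv⟩ := h.exists_hasEigenvector
  exact ⟨v, hv.2, by simpa using hv.apply_eq_smul⟩

lemma pow_apply_pos_of_pos_imp {A B : Matrix n n ℝ} (hA : ∀ i j, 0 ≤ A i j)
    (hB : ∀ i j, 0 ≤ B i j) (hAB : ∀ i j, 0 < A i j → 0 < B i j) (k : ℕ) (i j : n)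
    (h : 0 < (A ^ k) i j) : 0 < (B ^ k) i j := by
  induction k generalizing j with
  | zero => simpa using h
  | succ k ih =>
    rw [pow_succ, mul_apply] at h ⊢
    obtain ⟨l, -, hl⟩ := (Finset.sum_pos_iff_of_nonneg fun l _ =>
      mul_nonneg (pow_apply_nonneg hA k i l) (hA l j)).1 h
    refine (Finset.sum_pos_iff_of_nonneg fun l _ =>
      mul_nonneg (pow_apply_nonneg hB k i l) (hB l j)).2 ⟨l, Finset.mem_univ l, ?_⟩
    exact mul_pos (ih l (pos_of_mul_pos_left hl (hA l j)))
      (hAB l j (pos_of_mul_pos_right hl (pow_apply_nonneg hA k i l)))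

lemma IsIrreducible.of_pos_imp {A B : Matrix n n ℝ} (hA : A.IsIrreducible)
    (hB : ∀ i j, 0 ≤ B i j) (hAB : ∀ i j, 0 < A i j → 0 < B i j) : B.IsIrreducible := by
  rw [isIrreducible_iff_exists_pow_pos hB]
  intro i j
  obtain ⟨k, hk, hpos⟩ := (isIrreducible_iff_exists_pow_pos hA.nonneg).1 hA i j
  exact ⟨k, hk, pow_apply_pos_of_pos_imp hA.nonneg hB hAB k i j hpos⟩

lemma smul_pow_mulVec_le {A : Matrix n n ℝ} (hA : ∀ i j, 0 ≤ A i j) {r : ℝ} {w : n → ℝ}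
    (hw : r • w ≤ A *ᵥ w) (k : ℕ) : r • (A ^ k *ᵥ w) ≤ A *ᵥ (A ^ k *ᵥ w) := by
  have hcomm : A *ᵥ (A ^ k *ᵥ w) = A ^ k *ᵥ (A *ᵥ w) := by
    rw [mulVec_mulVec, mulVec_mulVec, ← pow_succ', pow_succ]
  rw [hcomm, ← mulVec_smul]
  exact mulVec_mono_of_nonneg (pow_apply_nonneg hA k) hw

/-- Summing `A ^ k w` over exponents `k` that connect every index to a fixed `j` with
`0 < w j` spreads the support of `w` to all indices. -/
lemma IsIrreducible.exists_pos_subeigenvector {A : Matrix n n ℝ} (hA : A.IsIrreducible)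
    {r : ℝ} {w : n → ℝ} (hw0 : 0 ≤ w) (hw : w ≠ 0) (hrw : r • w ≤ A *ᵥ w) :
    ∃ w' : n → ℝ, (∀ i, 0 < w' i) ∧ r • w' ≤ A *ᵥ w' := by
  obtain ⟨j, hj⟩ : ∃ j, 0 < w j := by
    by_contra! h
    exact hw (funext fun j => le_antisymm (h j) (hw0 j))
  choose k _ hk using (isIrreducible_iff_exists_pow_pos hA.nonneg).1 hA
  refine ⟨∑ i, A ^ k i j *ᵥ w, fun i => ?_, ?_⟩
  · calc 0 < (A ^ k i j) i j * w j := mul_pos (hk i j) hj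
      _ ≤ (A ^ k i j *ᵥ w) i := single_mul_le_mulVec (pow_apply_nonneg hA.nonneg _) hw0 i j
      _ ≤ (∑ l, A ^ k l j *ᵥ w) i := by
        rw [Finset.sum_apply]
        exact Finset.single_le_sum (f := fun l => (A ^ k l j *ᵥ w) i)
          (fun l _ => mulVec_nonneg_of_nonneg (pow_apply_nonneg hA.nonneg _) hw0 i)
          (Finset.mem_univ i)
  · rw [Finset.smul_sum, mulVec_sum]
    exact Finset.sum_le_sum fun l _ => smul_pow_mulVec_le hA.nonneg hrw _

lemma isIrreducible_mul_diagonal_mul_transpose [Fintype m] [DecidableEq m] {M : Matrix n m ℝ}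
    (hM : ∀ i j, 0 ≤ M i j) {b : m → ℝ} (hb : ∀ j, 0 < b j) (h : (M * Mᵀ).IsIrreducible) :
    (M * diagonal b * Mᵀ).IsIrreducible := by
  have happly : ∀ i k, (M * diagonal b * Mᵀ) i k = ∑ j, M i j * b j * M k j := by
    intro i k
    rw [mul_apply]
    simp only [mul_diagonal, transpose_apply]
  refine h.of_pos_imp (fun i k => ?_) (fun i k hik => ?_)
  · rw [happly]
    exact Finset.sum_nonneg fun j _ => mul_nonneg (mul_nonneg (hM i j) (hb j).le) (hM k j)
  · simp only [mul_apply, transpose_apply] at hik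
    obtain ⟨j, -, hj⟩ := (Finset.sum_pos_iff_of_nonneg fun j _ =>
      mul_nonneg (hM i j) (hM k j)).1 hik
    calc 0 < M i j * b j * M k j := by
          rw [mul_right_comm]; exact mul_pos hj (hb j)
      _ ≤ ∑ l, M i l * b l * M k l := Finset.single_le_sum
          (f := fun l => M i l * b l * M k l)
          (fun l _ => mul_nonneg (mul_nonneg (hM i l) (hb l).le) (hM k l)) (Finset.mem_univ j)
      _ = _ := (happly i k).symm

end Matrix

section SpectralRadius

variable {n : Type*} [Fintype n] [DecidableEq n]

lemma exists_mem_spectrum_lt_norm_of_lt_specRad {X : Matrix n n ℝ} {t : ℝ} (ht : 0 ≤ t)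
    (h : t < specRad X) : ∃ z ∈ spectrum ℂ (X.map ((↑) : ℝ → ℂ)), t < ‖z‖ := by
  by_contra! hle
  rcases ((fun z : ℂ => ‖z‖) '' spectrum ℂ (X.map ((↑) : ℝ → ℂ))).eq_empty_or_nonempty
    with he | hne
  · rw [specRad, he, Real.sSup_empty] at h
    exact h.not_ge ht
  · exact h.not_ge (csSup_le hne (by simpa using hle))

/-- The triangle inequality applied to an eigenvector `v` gives `‖z‖ • |v| ≤ X |v|`. -/
lemma exists_subeigenvector_of_mem_spectrum {X : Matrix n n ℝ} (hX : ∀ i j, 0 ≤ X i j) {z : ℂ}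
    (h : z ∈ spectrum ℂ (X.map ((↑) : ℝ → ℂ))) :
    ∃ w : n → ℝ, 0 ≤ w ∧ w ≠ 0 ∧ ‖z‖ • w ≤ X *ᵥ w := by
  obtain ⟨v, hv0, hv⟩ := exists_mulVec_eq_smul_of_mem_spectrum h
  refine ⟨fun i => ‖v i‖, fun i => norm_nonneg _, fun h0 => hv0 ?_, fun i => ?_⟩
  · funext i
    simpa using congrFun h0 i
  calc ‖z‖ * ‖v i‖ = ‖∑ k, (X i k : ℂ) * v k‖ := by
        rw [← norm_mul, ← smul_eq_mul, ← Pi.smul_apply z v, ← hv]; rfl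
    _ ≤ ∑ k, ‖(X i k : ℂ) * v k‖ := norm_sum_le _ _
    _ = (X *ᵥ fun k => ‖v k‖) i := by
        simp [mulVec, dotProduct, Complex.norm_real, abs_of_nonneg (hX _ _)]

lemma exists_subeigenvector_of_one_lt_specRad {X : Matrix n n ℝ} (hX : ∀ i j, 0 ≤ X i j)
    (h : 1 < specRad X) : ∃ r : ℝ, 1 < r ∧ ∃ w : n → ℝ, 0 ≤ w ∧ w ≠ 0 ∧ r • w ≤ X *ᵥ w := by
  obtain ⟨z, hz, hz1⟩ := exists_mem_spectrum_lt_norm_of_lt_specRad zero_le_one h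
  exact ⟨‖z‖, hz1, exists_subeigenvector_of_mem_spectrum hX hz⟩

lemma exists_pos_subsolution_of_one_lt_specRad {A : Matrix n n ℝ} (hA : A.IsIrreducible)
    {a d : n → ℝ} (ha : ∀ i, 0 < a i) (hd : ∀ i, 0 < d i)
    (h : 1 < specRad (diagonal a * A * diagonal d⁻¹)) :
    ∃ r : ℝ, 1 < r ∧ ∃ w : n → ℝ, (∀ i, 0 < w i) ∧ r • (d * w) ≤ a * (A *ᵥ w) := by
  have happly : ∀ i k, (diagonal a * A * diagonal d⁻¹) i k = a i * A i k * (d k)⁻¹ := by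
    simp [mul_diagonal, diagonal_mul]
  have hX : (diagonal a * A * diagonal d⁻¹).IsIrreducible := by
    refine hA.of_pos_imp (fun i k => ?_) (fun i k hik => ?_) <;> rw [happly]
    · exact mul_nonneg (mul_nonneg (ha i).le (hA.nonneg i k)) (inv_pos.2 (hd k)).le
    · exact mul_pos (mul_pos (ha i) hik) (inv_pos.2 (hd k))
  obtain ⟨r, hr, w₀, hw₀, hw₀0, hrw₀⟩ := exists_subeigenvector_of_one_lt_specRad hX.nonneg h
  obtain ⟨w, hw, hrw⟩ := hX.exists_pos_subeigenvector hw₀ hw₀0 hrw₀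
  refine ⟨r, hr, d⁻¹ * w, fun i => mul_pos (inv_pos.2 (hd i)) (hw i), ?_⟩
  have hdw : d * (d⁻¹ * w) = w := by
    funext i; simp [(hd i).ne']
  rw [hdw]
  convert hrw using 1
  have hdiag (v x : n → ℝ) : diagonal v *ᵥ x = v * x := funext (mulVec_diagonal v x)
  rw [← mulVec_mulVec, ← mulVec_mulVec, hdiag, hdiag]

end SpectralRadius

lemma exists_fixedPt_of_monotoneOn_Icc {α : Type*} [ConditionallyCompleteLattice α] {a b : α}
    (hab : a ≤ b) {f : α → α} (hf : MonotoneOn f (Set.Icc a b))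
    (hmaps : Set.MapsTo f (Set.Icc a b) (Set.Icc a b)) : ∃ x ∈ Set.Icc a b, f x = x := by
  have : Fact (a ≤ b) := ⟨hab⟩
  let g : Set.Icc a b →o Set.Icc a b :=
    ⟨hmaps.restrict f _ _, fun x y hxy => hf x.2 y.2 hxy⟩
  exact ⟨g.lfp, g.lfp.2, congrArg Subtype.val g.map_lfp⟩

/-- Compare `Q` with the largest multiple `θ Q ≤ P`: if `θ < 1`, then at an index where
`P i = θ Q i` strict subhomogeneity gives `P i = T P i ≥ T (θ Q) i > θ Q i`. -/
lemma le_of_isFixedPt_of_strictSubhomogeneous {ι : Type*} [Finite ι] {T : (ι → ℝ) → ι → ℝ}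
    (hmono : ∀ x y, 0 ≤ x → x ≤ y → T x ≤ T y)
    (hsub : ∀ x, 0 ≤ x → ∀ θ : ℝ, 0 < θ → θ < 1 → ∀ i, 0 < T x i → θ * T x i < T (θ • x) i)
    {P Q : ι → ℝ} (hP : ∀ i, 0 < P i) (hQ : ∀ i, 0 < Q i) (hPfix : T P = P)
    (hQfix : T Q = Q) : Q ≤ P := by
  by_contra hQP
  obtain ⟨k, hk⟩ : ∃ k, P k < Q k := by simpa [Pi.le_def] using hQP
  have : Nonempty ι := ⟨k⟩
  obtain ⟨i, hi⟩ := Finite.exists_min fun i => P i / Q i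
  set θ := P i / Q i
  have hθ : ∀ l, θ * Q l ≤ P l := fun l => (le_div_iff₀ (hQ l)).1 (hi l)
  have hθpos : 0 < θ := div_pos (hP i) (hQ i)
  have hθ1 : θ < 1 := (hi k).trans_lt ((div_lt_one (hQ k)).2 hk)
  have hTQ : 0 < T Q i := by rw [hQfix]; exact hQ i
  have := calc P i = θ * Q i := (div_mul_cancel₀ _ (hQ i).ne').symm
    _ = θ * T Q i := by rw [hQfix]
    _ < T (θ • Q) i := hsub Q (fun l => (hQ l).le) θ hθpos hθ1 i hTQ
    _ ≤ T P i := hmono _ _ (fun l => (mul_pos hθpos (hQ l)).le) hθ i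
    _ = P i := by rw [hPfix]
  exact this.false

lemma eq_of_isFixedPt_of_strictSubhomogeneous {ι : Type*} [Finite ι] {T : (ι → ℝ) → ι → ℝ}
    (hmono : ∀ x y, 0 ≤ x → x ≤ y → T x ≤ T y)
    (hsub : ∀ x, 0 ≤ x → ∀ θ : ℝ, 0 < θ → θ < 1 → ∀ i, 0 < T x i → θ * T x i < T (θ • x) i)
    {P Q : ι → ℝ} (hP : ∀ i, 0 < P i) (hQ : ∀ i, 0 < Q i) (hPfix : T P = P)
    (hQfix : T Q = Q) : P = Q :=
  le_antisymm (le_of_isFixedPt_of_strictSubhomogeneous hmono hsub hQ hP hQfix hPfix)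
    (le_of_isFixedPt_of_strictSubhomogeneous hmono hsub hP hQ hPfix hQfix)

section EndemicMap

variable {ι : Type*} [Fintype ι] (A : Matrix ι ι ℝ) (S d c : ι → ℝ)

/-- Its positive fixed points are the infected compartments of the endemic equilibria. -/
noncomputable def endemicMap (x : ι → ℝ) : ι → ℝ :=
  fun i => S i * (A *ᵥ x) i / (d i + c i * (A *ᵥ x) i)

variable {A S d c}

lemma endemicMap_denom_pos (hA : ∀ i j, 0 ≤ A i j) (hd : ∀ i, 0 < d i) (hc : ∀ i, 0 ≤ c i)
    {x : ι → ℝ} (hx : 0 ≤ x) (i : ι) : 0 < d i + c i * (A *ᵥ x) i :=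
  add_pos_of_pos_of_nonneg (hd i) (mul_nonneg (hc i) (mulVec_nonneg_of_nonneg hA hx i))

lemma endemicMap_le (hA : ∀ i j, 0 ≤ A i j) (hS : ∀ i, 0 ≤ S i) (hd : ∀ i, 0 < d i)
    (hc : ∀ i, 0 < c i) {x : ι → ℝ} (hx : 0 ≤ x) : endemicMap A S d c x ≤ S / c := fun i => by
  have hAx := mulVec_nonneg_of_nonneg hA hx i
  rw [endemicMap, Pi.div_apply,
    div_le_div_iff₀ (endemicMap_denom_pos hA hd (fun i => (hc i).le) hx i) (hc i)]
  nlinarith [mul_nonneg (hS i) (hd i).le]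

lemma endemicMap_mono (hA : ∀ i j, 0 ≤ A i j) (hS : ∀ i, 0 ≤ S i) (hd : ∀ i, 0 < d i)
    (hc : ∀ i, 0 ≤ c i) {x y : ι → ℝ} (hx : 0 ≤ x) (hxy : x ≤ y) :
    endemicMap A S d c x ≤ endemicMap A S d c y := fun i => by
  have hAx := mulVec_nonneg_of_nonneg hA hx i
  have hAxy := mulVec_mono_of_nonneg hA hxy i
  rw [endemicMap, endemicMap, div_le_div_iff₀ (endemicMap_denom_pos hA hd hc hx i)
    (endemicMap_denom_pos hA hd hc (hx.trans hxy) i)]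
  nlinarith [mul_le_mul_of_nonneg_left hAxy (mul_nonneg (hS i) (hd i).le)]

lemma lt_endemicMap_smul (hA : ∀ i j, 0 ≤ A i j) (hd : ∀ i, 0 < d i) (hc : ∀ i, 0 < c i)
    {x : ι → ℝ} (hx : 0 ≤ x) {θ : ℝ} (hθ : 0 < θ) (hθ1 : θ < 1) {i : ι}
    (hi : 0 < endemicMap A S d c x i) :
    θ * endemicMap A S d c x i < endemicMap A S d c (θ • x) i := by
  have hθx : 0 ≤ θ • x := smul_nonneg hθ.le hx
  have hden := endemicMap_denom_pos hA hd (fun i => (hc i).le) hx i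
  have hθden := endemicMap_denom_pos hA hd (fun i => (hc i).le) hθx i
  have hSAx : 0 < S i * (A *ᵥ x) i := by
    simpa [endemicMap, div_pos_iff_of_pos_right hden] using hi
  have hAx : 0 < (A *ᵥ x) i :=
    (mulVec_nonneg_of_nonneg hA hx i).lt_of_ne fun h => by simp [← h] at hSAx
  rw [endemicMap, endemicMap, mulVec_smul, Pi.smul_apply, smul_eq_mul, mul_div_assoc',
    div_lt_div_iff₀ hden (by simpa [mulVec_smul] using hθden)]
  nlinarith [mul_pos (mul_pos hSAx hθ) (mul_pos (mul_pos (hc i) hAx) (sub_pos.2 hθ1))]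

lemma endemicMap_eq_self_iff (hA : ∀ i j, 0 ≤ A i j) (hd : ∀ i, 0 < d i) (hc : ∀ i, 0 ≤ c i)
    {x : ι → ℝ} (hx : 0 ≤ x) :
    endemicMap A S d c x = x ↔ S * (A *ᵥ x) = x * (d + c * (A *ᵥ x)) := by
  simp only [funext_iff, endemicMap, Pi.mul_apply, Pi.add_apply,
    div_eq_iff (endemicMap_denom_pos hA hd hc hx _).ne']

lemma eventually_smul_le_endemicMap (hA : ∀ i j, 0 ≤ A i j) (hd : ∀ i, 0 < d i)
    (hc : ∀ i, 0 ≤ c i) {w : ι → ℝ} (hw : ∀ i, 0 < w i) {r : ℝ} (hr : 1 < r)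
    (hsub : r • (d * w) ≤ S * (A *ᵥ w)) :
    ∀ᶠ ε in 𝓝[>] (0 : ℝ), ε • w ≤ endemicMap A S d c (ε • w) := by
  simp only [Pi.le_def, eventually_all]
  intro i
  have hgap : ∀ᶠ ε : ℝ in 𝓝 0, ε * (c i * (A *ᵥ w) i) < (r - 1) * d i := by
    have hlim : Tendsto (fun ε : ℝ => ε * (c i * (A *ᵥ w) i)) (𝓝 0) (𝓝 0) := by
      simpa using (tendsto_id (x := 𝓝 (0 : ℝ))).mul_const (c i * (A *ᵥ w) i)
    exact hlim.eventually_lt_const (by nlinarith [hd i])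
  filter_upwards [mem_nhdsWithin_of_mem_nhds hgap, self_mem_nhdsWithin] with ε hε (hε0 : 0 < ε)
  have hsubi := hsub i
  simp only [Pi.smul_apply, Pi.mul_apply, smul_eq_mul] at hsubi ⊢
  have hden := endemicMap_denom_pos hA hd hc (smul_nonneg hε0.le fun i => (hw i).le) i
  rw [endemicMap, le_div_iff₀ hden, mulVec_smul]
  simp only [Pi.smul_apply, smul_eq_mul]
  nlinarith [mul_le_mul_of_nonneg_left hε.le (mul_nonneg hε0.le (hw i).le)]

lemma exists_pos_fixedPt_endemicMap (hA : ∀ i j, 0 ≤ A i j) (hS : ∀ i, 0 ≤ S i)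
    (hd : ∀ i, 0 < d i) (hc : ∀ i, 0 < c i) {w : ι → ℝ} (hw : ∀ i, 0 < w i) {r : ℝ}
    (hr : 1 < r) (hsub : r • (d * w) ≤ S * (A *ᵥ w)) :
    ∃ x : ι → ℝ, (∀ i, 0 < x i) ∧ endemicMap A S d c x = x := by
  have hc0 : ∀ i, 0 ≤ c i := fun i => (hc i).le
  obtain ⟨ε, hεw, hε : 0 < ε⟩ :=
    ((eventually_smul_le_endemicMap hA hd hc0 hw hr hsub).and self_mem_nhdsWithin).exists
  have hx₀ : ∀ i, 0 < (ε • w) i := fun i => mul_pos hε (hw i)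
  have hx₀0 : 0 ≤ ε • w := fun i => (hx₀ i).le
  obtain ⟨x, ⟨hx₀x, -⟩, hfix⟩ := exists_fixedPt_of_monotoneOn_Icc
    (hεw.trans (endemicMap_le hA hS hd hc hx₀0))
    (fun x hx y _ hxy => endemicMap_mono hA hS hd hc0 (hx₀0.trans hx.1) hxy)
    (fun x hx => ⟨hεw.trans (endemicMap_mono hA hS hd hc0 hx₀0 hx.1),
      endemicMap_le hA hS hd hc (hx₀0.trans hx.1)⟩)
  exact ⟨x, fun i => (hx₀ i).trans_le (hx₀x i), hfix⟩

lemma eq_of_endemicMap_eq_self (hA : ∀ i j, 0 ≤ A i j) (hS : ∀ i, 0 ≤ S i)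
    (hd : ∀ i, 0 < d i) (hc : ∀ i, 0 < c i) {x y : ι → ℝ} (hx : ∀ i, 0 < x i)
    (hy : ∀ i, 0 < y i) (hxfix : endemicMap A S d c x = x) (hyfix : endemicMap A S d c y = y) :
    x = y :=
  eq_of_isFixedPt_of_strictSubhomogeneous
    (fun _ _ hx hxy => endemicMap_mono hA hS hd (fun i => (hc i).le) hx hxy)
    (fun _ hx _ hθ hθ1 _ hi => lt_endemicMap_smul hA hd hc hx hθ hθ1 hi) hx hy hxfix hyfix

end EndemicMap

section Model

variable {ι : Type*}

/- At an equilibrium the `E` and `I` equations make the incidence `S ∘ A I` equal to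
`infectionFactor ∘ I`, and then the `S` and `R` equations give `S = Λ / μ - depletionFactor ∘ I`. -/
noncomputable def infectionFactor (μ ν γ : ι → ℝ) : ι → ℝ :=
  fun i => (μ i + ν i) * (μ i + γ i) / ν i

noncomputable def depletionFactor (μ ν γ η : ι → ℝ) : ι → ℝ :=
  fun i => (infectionFactor μ ν γ i - η i * γ i / (η i + μ i)) / μ i

lemma infectionFactor_pos {μ ν γ : ι → ℝ} (hμ : ∀ i, 0 < μ i) (hν : ∀ i, 0 < ν i)
    (hγ : ∀ i, 0 ≤ γ i) (i : ι) : 0 < infectionFactor μ ν γ i := by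
  have := hμ i; have := hν i; have := hγ i
  unfold infectionFactor; positivity

lemma depletionFactor_pos {μ ν γ η : ι → ℝ} (hμ : ∀ i, 0 < μ i) (hν : ∀ i, 0 < ν i)
    (hγ : ∀ i, 0 ≤ γ i) (hη : ∀ i, 0 ≤ η i) (i : ι) : 0 < depletionFactor μ ν γ η i := by
  have hμi := hμ i; have hνi := hν i; have hγi := hγ i; have hηi := hη i
  have hd : γ i < infectionFactor μ ν γ i := by
    rw [infectionFactor, lt_div_iff₀ hνi]; nlinarith
  have hR : η i * γ i / (η i + μ i) ≤ γ i := by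
    rw [div_le_iff₀ (by linarith)]; nlinarith
  exact div_pos (by linarith) hμi

lemma seirs_equilibrium_iff {Λ μ ν γ η d c S E I R a : ℝ} (hμ : μ ≠ 0) (hν : ν ≠ 0)
    (hημ : η + μ ≠ 0) (hd : d * ν = (ν + μ) * (γ + μ)) (hc : μ * c = d - η * γ / (η + μ)) :
    (0 = Λ - S * a - μ * S + η * R ∧ 0 = S * a - (ν + μ) * E ∧ 0 = ν * E - (γ + μ) * I ∧
      0 = γ * I - (η + μ) * R) ↔
    (S = Λ / μ - c * I ∧ E = (γ + μ) * I / ν ∧ R = γ * I / (η + μ) ∧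
      Λ / μ * a = I * (d + c * a)) := by
  have hRγ : η * (γ * I / (η + μ)) = η * γ / (η + μ) * I := by ring
  have hΛ : μ * (Λ / μ) = Λ := mul_div_cancel₀ Λ hμ
  constructor
  · rintro ⟨h1, h2, h3, h4⟩
    have hE : E = (γ + μ) * I / ν := by rw [eq_div_iff hν]; linarith
    have hR : R = γ * I / (η + μ) := by rw [eq_div_iff hημ]; linarith
    have hSa : S * a = d * I := by
      have : ν * (S * a) = ν * (d * I) := by linear_combination -ν * h2 - (ν + μ) * h3 - I * hd
      exact mul_left_cancel₀ hν this
    have hS : S = Λ / μ - c * I := by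
      have : μ * S = μ * (Λ / μ - c * I) := by
        rw [hR] at h1; linear_combination h1 - hSa + I * hc - hΛ
      exact mul_left_cancel₀ hμ this
    refine ⟨hS, hE, hR, ?_⟩
    rw [hS] at hSa; linear_combination hSa
  · rintro ⟨rfl, rfl, rfl, h⟩
    refine ⟨?_, ?_, ?_, ?_⟩
    · linear_combination h - hRγ + hΛ - I * hc
    · have hdI : (ν + μ) * ((γ + μ) * I / ν) = d * I := by
        field_simp; linear_combination -I * hd
      linear_combination -h + hdI
    · field_simp; ring
    · field_simp; ring

variable [Fintype ι] [DecidableEq ι]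

def IsEquilibrium (Λ μ ν γ η : ι → ℝ) (A : Matrix ι ι ℝ) (S E I R : ι → ℝ) : Prop :=
  0 = Λ - (diagonal S * A) *ᵥ I - diagonal μ *ᵥ S + diagonal η *ᵥ R ∧
  0 = (diagonal S * A) *ᵥ I - diagonal (fun i => ν i + μ i) *ᵥ E ∧
  0 = diagonal ν *ᵥ E - diagonal (fun i => γ i + μ i) *ᵥ I ∧
  0 = diagonal γ *ᵥ I - diagonal (fun i => η i + μ i) *ᵥ R

lemma isEquilibrium_iff {Λ μ ν γ η : ι → ℝ} (hμ : ∀ i, 0 < μ i) (hν : ∀ i, 0 < ν i)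
    (hη : ∀ i, 0 ≤ η i) (A : Matrix ι ι ℝ) (S E I R : ι → ℝ) :
    IsEquilibrium Λ μ ν γ η A S E I R ↔
      S = Λ / μ - depletionFactor μ ν γ η * I ∧ E = (γ + μ) * I / ν ∧ R = γ * I / (η + μ) ∧
      Λ / μ * (A *ᵥ I) = I * (infectionFactor μ ν γ + depletionFactor μ ν γ η * (A *ᵥ I)) := by
  simp only [IsEquilibrium, funext_iff, ← forall_and, ← mulVec_mulVec, mulVec_diagonal,
    Pi.zero_apply, Pi.add_apply, Pi.sub_apply, Pi.mul_apply, Pi.div_apply]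
  refine forall_congr' fun i => seirs_equilibrium_iff (hμ i).ne' (hν i).ne'
    (by linarith [hμ i, hη i]) ?_ ?_
  · simp only [infectionFactor]; field_simp [(hν i).ne']; ring
  · simp only [depletionFactor]; field_simp [(hμ i).ne']

theorem existsUnique_endemicEquilibrium {Λ μ ν γ η : ι → ℝ} (hΛ : ∀ i, 0 < Λ i)
    (hμ : ∀ i, 0 < μ i) (hν : ∀ i, 0 < ν i) (hγ : ∀ i, 0 ≤ γ i) (hη : ∀ i, 0 ≤ η i)
    {A : Matrix ι ι ℝ} (hA : A.IsIrreducible)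
    (hR0 : 1 < specRad (diagonal (Λ / μ) * A * diagonal ν *
      diagonal (fun i => ((μ i + ν i) * (μ i + γ i))⁻¹))) :
    ∃! x : (ι → ℝ) × (ι → ℝ) × (ι → ℝ) × (ι → ℝ),
      (∀ i, 0 < x.2.2.1 i) ∧ IsEquilibrium Λ μ ν γ η A x.1 x.2.1 x.2.2.1 x.2.2.2 := by
  set d := infectionFactor μ ν γ
  set c := depletionFactor μ ν γ η
  have hS : ∀ i, 0 < (Λ / μ) i := fun i => div_pos (hΛ i) (hμ i)
  have hS0 : ∀ i, 0 ≤ (Λ / μ) i := fun i => (hS i).le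
  have hd := infectionFactor_pos hμ hν hγ
  have hc := depletionFactor_pos hμ hν hγ hη
  have hνd : diagonal ν * diagonal (fun i => ((μ i + ν i) * (μ i + γ i))⁻¹) = diagonal d⁻¹ := by
    rw [diagonal_mul_diagonal]
    congr 1; funext i
    simp [d, infectionFactor, div_eq_mul_inv]
  rw [Matrix.mul_assoc _ (diagonal ν), hνd] at hR0
  obtain ⟨r, hr, w, hw, hsub⟩ := exists_pos_subsolution_of_one_lt_specRad hA hS hd hR0
  obtain ⟨I, hIpos, hIfix⟩ := exists_pos_fixedPt_endemicMap hA.nonneg hS0 hd hc hw hr hsub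
  have hfix_iff (J : ι → ℝ) (hJ : ∀ i, 0 < J i) :=
    endemicMap_eq_self_iff (S := Λ / μ) hA.nonneg hd (fun i => (hc i).le) (fun i => (hJ i).le)
  refine ⟨(Λ / μ - c * I, (γ + μ) * I / ν, I, γ * I / (η + μ)),
    ⟨hIpos, (isEquilibrium_iff hμ hν hη A _ _ _ _).2 ⟨rfl, rfl, rfl, (hfix_iff I hIpos).1 hIfix⟩⟩,
    ?_⟩
  rintro ⟨S, E, J, R⟩ ⟨hJpos, hJ⟩
  obtain ⟨rfl, rfl, rfl, hJfix⟩ := (isEquilibrium_iff hμ hν hη A S E J R).1 hJ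
  obtain rfl := eq_of_endemicMap_eq_self hA.nonneg hS0 hd hc hJpos hIpos
    ((hfix_iff J hJpos).2 hJfix) hIfix
  rfl

end Model

theorem stmt17_general (u v : ℕ)
    (Λ μ ν γ η : Fin u → ℝ)
    (hΛ : ∀ i, 0 < Λ i) (hμ : ∀ i, 0 < μ i) (hν : ∀ i, 0 < ν i) (hγ : ∀ i, 0 < γ i)
    (hη : ∀ i, 0 ≤ η i)
    (B : Fin v → ℝ) (hB : ∀ j, 0 < B j)
    (M : Matrix (Fin u) (Fin v) ℝ) (hM : ∀ i j, 0 ≤ M i j)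
    (Sstar : Fin u → ℝ) (hSstar : ∀ i, Sstar i = Λ i / μ i)
    (hcol : ∀ j, ∃ i, 0 < M i j)
    (hirr : ∀ i j : Fin u, ∃ n : ℕ, 1 ≤ n ∧ 0 < ((M * Mᵀ) ^ n) i j)
    (hR0 : 1 < specRad (Matrix.diagonal Sstar * M * Matrix.diagonal B *
      Matrix.diagonal (fun j => ((Mᵀ *ᵥ Sstar) j)⁻¹) * Mᵀ *
      Matrix.diagonal ν * Matrix.diagonal (fun i => ((μ i + ν i) * (μ i + γ i))⁻¹))) :
    ∃! x : (Fin u → ℝ) × (Fin u → ℝ) × (Fin u → ℝ) × (Fin u → ℝ),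
      (∀ i, 0 < x.2.2.1 i) ∧
      0 = Λ - (Matrix.diagonal x.1 * M * Matrix.diagonal B *
            Matrix.diagonal (fun j => ((Mᵀ *ᵥ Sstar) j)⁻¹) * Mᵀ) *ᵥ x.2.2.1 -
          Matrix.diagonal μ *ᵥ x.1 + Matrix.diagonal η *ᵥ x.2.2.2 ∧
      0 = (Matrix.diagonal x.1 * M * Matrix.diagonal B *
            Matrix.diagonal (fun j => ((Mᵀ *ᵥ Sstar) j)⁻¹) * Mᵀ) *ᵥ x.2.2.1 -
          Matrix.diagonal (fun i => ν i + μ i) *ᵥ x.2.1 ∧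
      0 = Matrix.diagonal ν *ᵥ x.2.1 -
          Matrix.diagonal (fun i => γ i + μ i) *ᵥ x.2.2.1 ∧
      0 = Matrix.diagonal γ *ᵥ x.2.2.1 -
          Matrix.diagonal (fun i => η i + μ i) *ᵥ x.2.2.2 := by
  obtain rfl : Sstar = Λ / μ := funext hSstar
  set b : Fin v → ℝ := fun j => B j * ((Mᵀ *ᵥ (Λ / μ)) j)⁻¹
  have hS : ∀ i, 0 < (Λ / μ) i := fun i => div_pos (hΛ i) (hμ i)
  have hb : ∀ j, 0 < b j := fun j => by
    obtain ⟨i, hi⟩ := hcol j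
    have hle := single_mul_le_mulVec (A := Mᵀ) (fun j i => hM i j) (fun i => (hS i).le) j i
    exact mul_pos (hB j) (inv_pos.2 ((mul_pos hi (hS i)).trans_le hle))
  have hMMT : (M * Mᵀ).IsIrreducible := by
    refine (isIrreducible_iff_exists_pow_pos (A := M * Mᵀ) fun i k => ?_).2 hirr
    rw [mul_apply]
    exact Finset.sum_nonneg fun j _ => mul_nonneg (hM i j) (hM k j)
  have hassoc (s : Fin u → ℝ) : diagonal s * M * diagonal B *
      diagonal (fun j => ((Mᵀ *ᵥ (Λ / μ)) j)⁻¹) * Mᵀ = diagonal s * (M * diagonal b * Mᵀ) := by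
    simp only [Matrix.mul_assoc, diagonal_mul_diagonal, b]
  simp only [hassoc] at hR0 ⊢
  exact existsUnique_endemicEquilibrium hΛ hμ hν (fun i => (hγ i).le) hη
    (isIrreducible_mul_diagonal_mul_transpose hM hb hMMT) hR0

/-- in the identical-mobility model with no disease-induced
mortality, if `B > 0`, `M·Mᵀ` is irreducible, every column of `M` has a positive
entry, and `R0^Eq = ρ(diag(S*)·M·diag(B)·diag(MᵀS*)⁻¹·Mᵀ·diag(ν)·diag((μ+ν)∘(μ+γ))⁻¹) > 1`,
then there is a unique endemic equilibrium. -/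
theorem stmt17 (u v : ℕ) (hu : 1 ≤ u) (hv : 1 ≤ v)
    (Λ μ ν γ η : Fin u → ℝ)
    (hΛ : ∀ i, 0 < Λ i) (hμ : ∀ i, 0 < μ i) (hν : ∀ i, 0 < ν i) (hγ : ∀ i, 0 < γ i)
    (hη : ∀ i, 0 ≤ η i)
    (B : Fin v → ℝ) (hB : ∀ j, 0 < B j)
    (M : Matrix (Fin u) (Fin v) ℝ) (hM : ∀ i j, 0 ≤ M i j)
    (Sstar : Fin u → ℝ) (hSstar : ∀ i, Sstar i = Λ i / μ i)
    (hcol : ∀ j, ∃ i, 0 < M i j)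
    (hirr : ∀ i j : Fin u, ∃ n : ℕ, 1 ≤ n ∧ 0 < ((M * Mᵀ) ^ n) i j)
    (hR0 : 1 < specRad (Matrix.diagonal Sstar * M * Matrix.diagonal B *
      Matrix.diagonal (fun j => ((Mᵀ *ᵥ Sstar) j)⁻¹) * Mᵀ *
      Matrix.diagonal ν * Matrix.diagonal (fun i => ((μ i + ν i) * (μ i + γ i))⁻¹))) :
    ∃! x : (Fin u → ℝ) × (Fin u → ℝ) × (Fin u → ℝ) × (Fin u → ℝ),
      (∀ i, 0 < x.2.2.1 i) ∧
      0 = Λ - (Matrix.diagonal x.1 * M * Matrix.diagonal B *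
            Matrix.diagonal (fun j => ((Mᵀ *ᵥ Sstar) j)⁻¹) * Mᵀ) *ᵥ x.2.2.1 -
          Matrix.diagonal μ *ᵥ x.1 + Matrix.diagonal η *ᵥ x.2.2.2 ∧
      0 = (Matrix.diagonal x.1 * M * Matrix.diagonal B *
            Matrix.diagonal (fun j => ((Mᵀ *ᵥ Sstar) j)⁻¹) * Mᵀ) *ᵥ x.2.2.1 -
          Matrix.diagonal (fun i => ν i + μ i) *ᵥ x.2.1 ∧
      0 = Matrix.diagonal ν *ᵥ x.2.1 -
          Matrix.diagonal (fun i => γ i + μ i) *ᵥ x.2.2.1 ∧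
      0 = Matrix.diagonal γ *ᵥ x.2.2.1 -
          Matrix.diagonal (fun i => η i + μ i) *ᵥ x.2.2.2 :=
  stmt17_general u v Λ μ ν γ η hΛ hμ hν hγ hη B hB M hM Sstar hSstar hcol hirr hR0
end
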